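/- arXiv:2004.01158 — 4 statements merged into one kernel-verified Lean document; each statement's English description precedes it below -/
import Mathlib

section
/- Let p, q be selfadjoint projections in a unital C*-algebra with b = p + q. If b - 1 has trivial annihilator, then both (p - q) - 1 and (p - q) + 1 have trivial annihilator. -/
/-! Writing `d = p - q`, idempotency of `p` and `q` gives `(p + q - 1)² = (1 - d)(1 + d) = (1 + d)(1 - d)`.
If `p + q - 1` is left regular, so is its square, and a right factor of a left regular element is
left regular; hence both `1 + d` and `1 - d` (up to sign, `d - 1`) are. -/

theorem IsIdempotentElem.add_sub_one_mul_self {R : Type*} [Ring R] {p q : R}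
    (hp : IsIdempotentElem p) (hq : IsIdempotentElem q) :
    (p + q - 1) * (p + q - 1) = (1 - (p - q)) * (1 + (p - q)) := by
  have expand : (p + q - 1) * (p + q - 1) - (1 - (p - q)) * (1 + (p - q)) =
      2 * (p * p - p) + 2 * (q * q - q) := by
    noncomm_ring
  rw [← sub_eq_zero, expand, hp.eq, hq.eq, sub_self, sub_self, mul_zero, add_zero]

theorem diff_pm_one_trivial_annihilator_general {A : Type*} [CStarAlgebra A]
    (p q : A) (hp2 : p * p = p)
    (hq2 : q * q = q)
    (hb : ∀ x : A, (p + q - 1) * x = 0 → x = 0) :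
    (∀ x : A, ((p - q) - 1) * x = 0 → x = 0) ∧
      (∀ x : A, ((p - q) + 1) * x = 0 → x = 0) := by
  simp_rw [← isLeftRegular_iff_right_eq_zero_of_mul] at hb ⊢
  have hsq := IsIdempotentElem.add_sub_one_mul_self hp2 hq2
  have hreg : IsLeftRegular ((p + q - 1) * (p + q - 1)) := hb.mul hb
  constructor
  · refine IsLeftRegular.of_mul (a := -(1 + (p - q))) ?_
    rwa [show -(1 + (p - q)) * (p - q - 1) = (1 - (p - q)) * (1 + (p - q)) by noncomm_ring, ← hsq]
  · refine IsLeftRegular.of_mul (a := 1 - (p - q)) ?_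
    rwa [add_comm _ (1 : A), ← hsq]

/-- If `p, q` are selfadjoint projections in a unital C*-algebra and
`b - 1 = p + q - 1` has trivial annihilator, then `(p - q) - 1` and `(p - q) + 1`
both have trivial annihilator. -/
theorem diff_pm_one_trivial_annihilator {A : Type*} [CStarAlgebra A]
    (p q : A) (hp : IsSelfAdjoint p) (hp2 : p * p = p)
    (hq : IsSelfAdjoint q) (hq2 : q * q = q)
    (hb : ∀ x : A, (p + q - 1) * x = 0 → x = 0) :
    (∀ x : A, ((p - q) - 1) * x = 0 → x = 0) ∧
      (∀ x : A, ((p - q) + 1) * x = 0 → x = 0) :=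
  diff_pm_one_trivial_annihilator_general p q hp2 hq2 hb
end

section
/- Let x be a selfadjoint element of the Calkin algebra C(H). Then there exists a selfadjoint X ∈ B(H) with π(X) = x and ‖X‖ = ‖x‖, where ‖x‖ is the quotient norm. -/
/-!
A star homomorphism between C⋆-algebras is contractive, so every lift of `x` has norm at least
`‖x‖`. Conversely, start from any selfadjoint lift `X₀` (the real part of an arbitrary lift) and
clamp its spectrum to `[-‖x‖, ‖x‖]` by the continuous functional calculus: the truncation is a
selfadjoint element of norm at most `‖x‖`, and it still lifts `x` because the functional
calculus commutes with `π` and the truncation is the identity on the spectrum of `x`.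
-/

open scoped ComplexStarModule CStarAlgebra

lemma IsSelfAdjoint.exists_isSelfAdjoint_preimage {A B F : Type*} [AddCommGroup A] [Module ℂ A]
    [StarAddMonoid A] [StarModule ℂ A] [AddCommGroup B] [Module ℂ B] [StarAddMonoid B]
    [StarModule ℂ B] [FunLike F A B] [StarHomClass F A B] [LinearMapClass F ℂ A B]
    {f : F} (hf : Function.Surjective f) {b : B} (hb : IsSelfAdjoint b) :
    ∃ a : A, IsSelfAdjoint a ∧ f a = b := by
  obtain ⟨a, rfl⟩ := hf b
  exact ⟨ℜ a, (ℜ a).property, by rw [map_realPart, hb.coe_realPart]⟩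

section Truncation

variable {A B : Type*} [CStarAlgebra A] [CStarAlgebra B]

noncomputable def symmClamp (r t : ℝ) : ℝ := max (-r) (min r t)

lemma abs_symmClamp_le {r : ℝ} (hr : 0 ≤ r) (t : ℝ) : |symmClamp r t| ≤ r :=
  abs_le.mpr ⟨le_max_left _ _, max_le (by linarith) (min_le_left _ _)⟩

lemma symmClamp_of_abs_le {r t : ℝ} (ht : |t| ≤ r) : symmClamp r t = t := by
  rw [abs_le] at ht
  rw [symmClamp, min_eq_right ht.2, max_eq_right ht.1]

lemma cfc_symmClamp_norm_self {b : B} (hb : IsSelfAdjoint b) : cfc (symmClamp ‖b‖) b = b := by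
  nontriviality B
  refine (cfc_congr fun t ht ↦ ?_).trans (cfc_id ℝ b)
  exact symmClamp_of_abs_le (spectrum.norm_le_norm_of_mem ht)

lemma norm_cfc_symmClamp_le {r : ℝ} (hr : 0 ≤ r) (a : A) : ‖cfc (symmClamp r) a‖ ≤ r :=
  norm_cfc_le hr fun t _ ↦ abs_symmClamp_le hr t

lemma exists_isSelfAdjoint_preimage_norm_eq {π : A →⋆ₐ[ℂ] B} (hπ : Function.Surjective π)
    {b : B} (hb : IsSelfAdjoint b) : ∃ a : A, IsSelfAdjoint a ∧ π a = b ∧ ‖a‖ = ‖b‖ := by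
  obtain ⟨a₀, ha₀, rfl⟩ := hb.exists_isSelfAdjoint_preimage hπ
  have hπ_clamp : π (cfc (symmClamp ‖π a₀‖) a₀) = π a₀ := by
    rw [StarAlgHom.map_cfc π _ a₀ (by unfold symmClamp; fun_prop) (map_continuous π) ha₀ hb,
      cfc_symmClamp_norm_self hb]
  refine ⟨cfc (symmClamp ‖π a₀‖) a₀, cfc_predicate _ a₀, hπ_clamp, le_antisymm ?_ ?_⟩
  · exact norm_cfc_symmClamp_le (norm_nonneg _) a₀
  · calc ‖π a₀‖ = ‖π (cfc (symmClamp ‖π a₀‖) a₀)‖ := by rw [hπ_clamp]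
      _ ≤ ‖cfc (symmClamp ‖π a₀‖) a₀‖ := NonUnitalStarAlgHom.norm_apply_le π _

end Truncation

theorem calkin_selfAdjoint_norm_preserving_lift_general {H : Type*} [NormedAddCommGroup H]
    [InnerProductSpace ℂ H] [CompleteSpace H]
    {C : Type*} [CStarAlgebra C]
    (π : (H →L[ℂ] H) →⋆ₐ[ℂ] C) (hsurj : Function.Surjective π)
    (x : C) (hx : IsSelfAdjoint x) :
    ∃ X : H →L[ℂ] H, IsSelfAdjoint X ∧ π X = x ∧
      ‖X‖ = sInf {r : ℝ | ∃ Y : H →L[ℂ] H, π Y = x ∧ r = ‖Y‖} := by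
  obtain ⟨X, hX, hπX, hX_norm⟩ := exists_isSelfAdjoint_preimage_norm_eq hsurj hx
  have h_least : IsLeast {r : ℝ | ∃ Y : H →L[ℂ] H, π Y = x ∧ r = ‖Y‖} ‖X‖ := by
    refine ⟨⟨X, hπX, rfl⟩, ?_⟩
    rintro _ ⟨Y, rfl, rfl⟩
    exact hX_norm ▸ NonUnitalStarAlgHom.norm_apply_le π Y
  exact ⟨X, hX, hπX, h_least.csInf_eq.symm⟩

/-- Every selfadjoint element `x` of the Calkin algebra admits a
selfadjoint lift `X ∈ B(H)` whose norm equals the quotient norm of `x`,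
i.e. `‖X‖ = inf {‖Y‖ : π Y = x}`. -/
theorem calkin_selfAdjoint_norm_preserving_lift {H : Type*} [NormedAddCommGroup H]
    [InnerProductSpace ℂ H] [CompleteSpace H] [TopologicalSpace.SeparableSpace H]
    (hinf : ¬ FiniteDimensional ℂ H)
    {C : Type*} [CStarAlgebra C]
    (π : (H →L[ℂ] H) →⋆ₐ[ℂ] C) (hsurj : Function.Surjective π)
    (hker : ∀ X : H →L[ℂ] H, π X = 0 ↔ IsCompactOperator ⇑X)
    (x : C) (hx : IsSelfAdjoint x) :
    ∃ X : H →L[ℂ] H, IsSelfAdjoint X ∧ π X = x ∧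
      ‖X‖ = sInf {r : ℝ | ∃ Y : H →L[ℂ] H, π Y = x ∧ r = ‖Y‖} :=
  calkin_selfAdjoint_norm_preserving_lift_general π hsurj x hx
end

section
/- Let δ(t) = e^{tz} p e^{-tz} be a normalized geodesic in the projections of the Calkin algebra: p a projection, z* = -z, p z p = 0, (1-p) z (1-p) = 0, ‖z‖ ≤ π/2. Then there exist P, Z ∈ B(H) with P a projection lifting p, Z* = -Z, P Z P = 0, (1-P) Z (1-P) = 0, ‖Z‖ = ‖z‖, π(Z) = z, so that Δ(t) = e^{tZ} P e^{-tZ} satisfies π(Δ(t)) = δ(t) for all t. Moreover P can be chosen to be any projection lifting p. -/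
open NormedSpace
open scoped CStarAlgebra ComplexStarModule

/-!
The compression of a selfadjoint lift of `i z` to its `P`-codiagonal part is a selfadjoint lift
`A₀` of `i z` (which is `p`-codiagonal) anticommuting with the symmetry `2P - 1`. Clamping the
spectrum of `A₀` to `[-‖z‖, ‖z‖]` by the continuous functional calculus keeps all of this (the
clamp is odd, and it is the identity on the spectrum of `i z`) and brings the norm down to `‖z‖`.
Then `Z = -i · clamp(A₀)` works, and `π` commutes with the exponentials because it is continuous.
-/

def clamp (r t : ℝ) : ℝ := max (-r) (min r t)

theorem continuous_clamp (r : ℝ) : Continuous (clamp r) :=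
  continuous_const.max (continuous_const.min continuous_id)

theorem clamp_odd {r : ℝ} (hr : 0 ≤ r) : Function.Odd (clamp r) := by
  intro t
  simp only [clamp, max_def, min_def]
  split_ifs <;> linarith

theorem abs_clamp_le {r : ℝ} (hr : 0 ≤ r) (t : ℝ) : |clamp r t| ≤ r :=
  abs_le.2 ⟨le_max_left _ _, max_le (by linarith) (min_le_left _ _)⟩

theorem clamp_of_abs_le {r t : ℝ} (ht : |t| ≤ r) : clamp r t = t := by
  rw [abs_le] at ht
  rw [clamp, min_eq_right ht.2, max_eq_right ht.1]

section Codiagonal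

variable {R : Type*} [Ring R] {p x : R}

def IsCodiagonal (p x : R) : Prop :=
  p * x * p = 0 ∧ (1 - p) * x * (1 - p) = 0

def codiagonalPart (p x : R) : R :=
  p * x * (1 - p) + (1 - p) * x * p

theorem isCodiagonal_codiagonalPart (hp : IsIdempotentElem p) (x : R) :
    IsCodiagonal p (codiagonalPart p x) := by
  constructor
  · calc p * codiagonalPart p x * p
          = p * p * x * ((1 - p) * p) + p * (1 - p) * x * (p * p) := by
            simp only [codiagonalPart]; noncomm_ring
      _ = 0 := by rw [hp.one_sub_mul_self, hp.mul_one_sub_self]; simp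
  · calc (1 - p) * codiagonalPart p x * (1 - p)
          = (1 - p) * p * x * ((1 - p) * (1 - p)) + (1 - p) * (1 - p) * x * (p * (1 - p)) := by
            simp only [codiagonalPart]; noncomm_ring
      _ = 0 := by rw [hp.one_sub_mul_self, hp.mul_one_sub_self]; simp

theorem IsCodiagonal.codiagonalPart_eq (h : IsCodiagonal p x) : codiagonalPart p x = x := by
  have hsplit : x = p * x * p + codiagonalPart p x + (1 - p) * x * (1 - p) := by
    simp only [codiagonalPart]; noncomm_ring
  rw [h.1, h.2, zero_add, add_zero] at hsplit
  exact hsplit.symm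

theorem IsCodiagonal.reflection_conj (h : IsCodiagonal p x) :
    (2 * p - 1) * x * (2 * p - 1) = -x := by
  have hsplit : (2 * p - 1) * x * (2 * p - 1)
      = 2 * (p * x * p) + 2 * ((1 - p) * x * (1 - p)) - x := by
    noncomm_ring
  rw [hsplit, h.1, h.2]
  simp

theorem IsCodiagonal.of_reflection_conj [IsAddTorsionFree R] (hp : IsIdempotentElem p)
    (h : (2 * p - 1) * x * (2 * p - 1) = -x) : IsCodiagonal p x := by
  have hq : IsIdempotentElem (1 - p) := hp.one_sub
  constructor
  · have key : p * ((2 * p - 1) * x * (2 * p - 1)) * p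
        = (2 * (p * p) - p) * x * (2 * (p * p) - p) := by
      noncomm_ring
    rw [h, hp.eq, two_mul, add_sub_cancel_right, mul_neg, neg_mul] at key
    exact neg_eq_self.1 key
  · have key : (1 - p) * ((2 * p - 1) * x * (2 * p - 1)) * (1 - p)
        = ((1 - p) - 2 * ((1 - p) * (1 - p))) * x * ((1 - p) - 2 * ((1 - p) * (1 - p))) := by
      noncomm_ring
    rw [h, hq.eq, two_mul, sub_add_cancel_left] at key
    simp only [mul_neg, neg_mul, neg_neg] at key
    exact neg_eq_self.1 key

theorem IsCodiagonal.smul {𝕜 : Type*} [CommSemiring 𝕜] [Algebra 𝕜 R] (h : IsCodiagonal p x)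
    (c : 𝕜) : IsCodiagonal p (c • x) := by
  constructor
  · rw [mul_smul_comm, smul_mul_assoc, h.1, smul_zero]
  · rw [mul_smul_comm, smul_mul_assoc, h.2, smul_zero]

end Codiagonal

section CStarAlgebra

variable {A B : Type*} [CStarAlgebra A] [CStarAlgebra B]

theorem abs_le_norm_of_mem_spectrum {a : A} {t : ℝ} (ht : t ∈ spectrum ℝ a) : |t| ≤ ‖a‖ := by
  have : Nontrivial A := by
    by_contra h
    rw [not_nontrivial_iff_subsingleton] at h
    simp [spectrum.of_subsingleton] at ht
  exact spectrum.norm_le_norm_of_mem ht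

theorem cfc_clamp_norm_self {a : A} (ha : IsSelfAdjoint a) : cfc (clamp ‖a‖) a = a :=
  (cfc_congr fun _ ht => clamp_of_abs_le (abs_le_norm_of_mem_spectrum ht)).trans (cfc_id ℝ a)

theorem norm_cfc_clamp_le (a : A) {r : ℝ} (hr : 0 ≤ r) : ‖cfc (clamp r) a‖ ≤ r :=
  norm_cfc_le hr fun t _ => abs_clamp_le hr t

theorem Unitary.conj_cfc_eq_neg_of_conj_eq_neg (u : unitary A) {a : A} (ha : IsSelfAdjoint a)
    (hua : u * a * star (u : A) = -a) {f : ℝ → ℝ} (hf : Continuous f) (hodd : Function.Odd f) :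
    u * cfc f a * star (u : A) = -cfc f a := by
  have hconj := StarAlgHomClass.map_cfc (Unitary.conjStarAlgAut ℂ A u) f a
  simp only [Unitary.conjStarAlgAut_apply, hua] at hconj
  rw [hconj, ← cfc_comp_neg f a, ← cfc_neg f a]
  exact cfc_congr fun t _ => hodd t

theorem IsStarProjection.isCodiagonal_cfc {P a : A} (hP : IsStarProjection P)
    (ha : IsSelfAdjoint a) (hPa : IsCodiagonal P a) {f : ℝ → ℝ} (hf : Continuous f)
    (hodd : Function.Odd f) : IsCodiagonal P (cfc f a) := by
  have : IsAddTorsionFree A := .of_isTorsionFree ℂ A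
  have hstar : star (2 * P - 1) = 2 * P - 1 := by simp [two_mul, hP.isSelfAdjoint.star_eq]
  have hconj := Unitary.conj_cfc_eq_neg_of_conj_eq_neg ⟨_, hP.two_mul_sub_one_mem_unitary⟩ ha
    (by simpa [hstar] using hPa.reflection_conj) hf hodd
  exact .of_reflection_conj hP.isIdempotentElem (by simpa [hstar] using hconj)

theorem exists_isSelfAdjoint_isCodiagonal_lift (φ : A →⋆ₐ[ℂ] B)
    (hφ : Function.Surjective φ) {P : A} (hP : IsStarProjection P) {b : B}
    (hb : IsSelfAdjoint b) (hPb : IsCodiagonal (φ P) b) :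
    ∃ a, IsSelfAdjoint a ∧ IsCodiagonal P a ∧ φ a = b := by
  obtain ⟨x, rfl⟩ := hφ b
  refine ⟨codiagonalPart P (ℜ x), ?_, isCodiagonal_codiagonalPart hP.isIdempotentElem _, ?_⟩
  · simp only [IsSelfAdjoint, codiagonalPart, star_add, star_mul, star_sub, star_one,
      hP.isSelfAdjoint.star_eq, (ℜ x).property.star_eq, mul_assoc, add_comm]
  · simp only [codiagonalPart, map_add, map_mul, map_sub, map_one, map_realPart, hb.coe_realPart]
    exact hPb.codiagonalPart_eq

theorem exists_isSelfAdjoint_isCodiagonal_lift_norm_eq (φ : A →⋆ₐ[ℂ] B)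
    (hφ : Function.Surjective φ) {P : A} (hP : IsStarProjection P) {b : B}
    (hb : IsSelfAdjoint b) (hPb : IsCodiagonal (φ P) b) :
    ∃ a, IsSelfAdjoint a ∧ IsCodiagonal P a ∧ φ a = b ∧ ‖a‖ = ‖b‖ := by
  obtain ⟨a₀, ha₀, hPa₀, rfl⟩ := exists_isSelfAdjoint_isCodiagonal_lift φ hφ hP hb hPb
  have hφa : φ (cfc (clamp ‖φ a₀‖) a₀) = φ a₀ := by
    rw [StarAlgHom.map_cfc φ _ a₀ (continuous_clamp _).continuousOn, cfc_clamp_norm_self hb]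
  refine ⟨cfc (clamp ‖φ a₀‖) a₀, cfc_predicate _ _,
    hP.isCodiagonal_cfc ha₀ hPa₀ (continuous_clamp _) (clamp_odd (norm_nonneg _)), hφa, ?_⟩
  refine le_antisymm (norm_cfc_clamp_le a₀ (norm_nonneg _)) ?_
  calc ‖φ a₀‖ = ‖φ (cfc (clamp ‖φ a₀‖) a₀)‖ := by rw [hφa]
    _ ≤ ‖cfc (clamp ‖φ a₀‖) a₀‖ := NonUnitalStarAlgHom.norm_apply_le φ _

theorem map_exp_mul_mul_exp_neg (φ : A →⋆ₐ[ℂ] B) (X Q : A) (t : ℝ) :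
    φ (exp (t • X) * Q * exp (-(t • X))) = exp (t • φ X) * φ Q * exp (-(t • φ X)) := by
  have hexp (Y : A) : φ (exp Y) = exp (φ Y) :=
    map_exp_of_mem_ball (𝕂 := ℂ) φ (map_continuous φ) Y
      (by simp [NormedSpace.expSeries_radius_eq_top])
  simp [hexp, ← Complex.coe_smul]

end CStarAlgebra

theorem calkin_geodesic_lifts_general {H : Type*} [NormedAddCommGroup H]
    [InnerProductSpace ℂ H] [CompleteSpace H]
    {C : Type*} [CStarAlgebra C]
    (π : (H →L[ℂ] H) →⋆ₐ[ℂ] C) (hsurj : Function.Surjective π)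
    (p z : C)
    (hz : star z = -z) (hzp : p * z * p = 0) (hzp' : (1 - p) * z * (1 - p) = 0)
    (P : H →L[ℂ] H) (hP : IsSelfAdjoint P) (hP2 : P * P = P) (hPp : π P = p) :
    ∃ Z : H →L[ℂ] H, star Z = -Z ∧ P * Z * P = 0 ∧ (1 - P) * Z * (1 - P) = 0 ∧
      ‖Z‖ = ‖z‖ ∧ π Z = z ∧
      ∀ t : ℝ, π (exp (t • Z) * P * exp (-(t • Z))) =
        exp (t • z) * p * exp (-(t • z)) := by
  have hiz : IsSelfAdjoint (Complex.I • z) :=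
    Complex.isSelfAdjoint_I_smul_iff_mem_skewAdjoint.2 (skewAdjoint.mem_iff.2 hz)
  have hPiz : IsCodiagonal (π P) (Complex.I • z) := by
    rw [hPp]; exact IsCodiagonal.smul ⟨hzp, hzp'⟩ _
  obtain ⟨a, ha, hPa, hπa, hna⟩ :=
    exists_isSelfAdjoint_isCodiagonal_lift_norm_eq π hsurj ⟨hP2, hP⟩ hiz hPiz
  have hπZ : π (-Complex.I • a) = z := by
    rw [map_smul, hπa, smul_smul, neg_mul, Complex.I_mul_I, neg_neg, one_smul]
  refine ⟨-Complex.I • a, ?_, (hPa.smul _).1, (hPa.smul _).2, ?_, hπZ, fun t => ?_⟩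
  · simp [star_smul, ha.star_eq]
  · rw [norm_smul, hna, norm_smul, norm_neg, Complex.norm_I, one_mul, one_mul]
  · rw [map_exp_mul_mul_exp_neg, hπZ, hPp]

/-- A normalized geodesic `δ(t) = e^{tz} p e^{-tz}` of the projections
of the Calkin algebra lifts to a normalized geodesic `Δ(t) = e^{tZ} P e^{-tZ}` of the
projections of `B(H)`, where `P` may be chosen to be any projection lifting `p`. -/
theorem calkin_geodesic_lifts {H : Type*} [NormedAddCommGroup H]
    [InnerProductSpace ℂ H] [CompleteSpace H] [TopologicalSpace.SeparableSpace H]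
    (hinf : ¬ FiniteDimensional ℂ H)
    {C : Type*} [CStarAlgebra C]
    (π : (H →L[ℂ] H) →⋆ₐ[ℂ] C) (hsurj : Function.Surjective π)
    (hker : ∀ X : H →L[ℂ] H, π X = 0 ↔ IsCompactOperator ⇑X)
    (hnorm : ∀ X : H →L[ℂ] H,
      ‖π X‖ = sInf {r : ℝ | ∃ K : H →L[ℂ] H, IsCompactOperator ⇑K ∧ r = ‖X + K‖})
    (p z : C) (hp : IsSelfAdjoint p) (hp2 : p * p = p)
    (hz : star z = -z) (hzp : p * z * p = 0) (hzp' : (1 - p) * z * (1 - p) = 0)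
    (hznorm : ‖z‖ ≤ Real.pi / 2)
    (P : H →L[ℂ] H) (hP : IsSelfAdjoint P) (hP2 : P * P = P) (hPp : π P = p) :
    ∃ Z : H →L[ℂ] H, star Z = -Z ∧ P * Z * P = 0 ∧ (1 - P) * Z * (1 - P) = 0 ∧
      ‖Z‖ = ‖z‖ ∧ π Z = z ∧
      ∀ t : ℝ, π (exp (t • Z) * P * exp (-(t • Z))) =
        exp (t • z) * p * exp (-(t • z)) :=
  calkin_geodesic_lifts_general π hsurj p z hz hzp hzp' P hP hP2 hPp
end

section
/- Let P, Q be orthogonal projections on a Hilbert space. Then the kernel of P + Q - 1 equals (R(P) ∩ N(Q)) ⊕ (N(P) ∩ R(Q)). In particular, if R(P) ∩ N(Q) = {0} and N(P) ∩ R(Q) = {0}, then P + Q - 1 is injective. -/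
namespace LinearMap

variable {R M : Type*} [Ring R] [AddCommGroup M] [Module R M] {p q : Module.End R M}

/-- Applying `p` and `q` to `p x + q x = x` and cancelling gives `p (q x) = 0 = q (p x)`, so
the decomposition `x = p x + q x` has its summands in the two intersections. -/
theorem ker_add_sub_one_of_isIdempotentElem (hp : IsIdempotentElem p) (hq : IsIdempotentElem q) :
    ker (p + q - 1) = range p ⊓ ker q ⊔ ker p ⊓ range q := by
  apply le_antisymm
  · intro x hx
    have hx : p x + q x = x := by simpa [sub_eq_zero] using hx
    have hpq : p (q x) = 0 := by
      have h := congrArg p hx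
      rwa [map_add, ← Module.End.mul_apply, hp.eq, add_eq_left] at h
    have hqp : q (p x) = 0 := by
      have h := congrArg q hx
      rwa [map_add, ← Module.End.mul_apply q q, hq.eq, add_eq_right] at h
    rw [← hx]
    exact Submodule.add_mem_sup ⟨⟨x, rfl⟩, hqp⟩ ⟨hpq, ⟨x, rfl⟩⟩
  · refine sup_le ?_ ?_
    · rintro x ⟨hpx : x ∈ range p, hqx : q x = 0⟩
      rw [LinearMap.IsIdempotentElem.mem_range_iff hp] at hpx
      simp [hpx, hqx]
    · rintro x ⟨hpx : p x = 0, hqx : x ∈ range q⟩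
      rw [LinearMap.IsIdempotentElem.mem_range_iff hq] at hqx
      simp [hpx, hqx]

end LinearMap

theorem ker_sum_sub_one_general {H : Type*} [NormedAddCommGroup H]
    [InnerProductSpace ℂ H]
    (P Q : H →L[ℂ] H) (hP2 : P * P = P) (hQ2 : Q * Q = Q) :
    LinearMap.ker ((P + Q - 1 : H →L[ℂ] H) : H →ₗ[ℂ] H) =
        (LinearMap.range (P : H →ₗ[ℂ] H) ⊓ LinearMap.ker (Q : H →ₗ[ℂ] H)) ⊔ (LinearMap.ker (P : H →ₗ[ℂ] H) ⊓ LinearMap.range (Q : H →ₗ[ℂ] H)) ∧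
      (LinearMap.range (P : H →ₗ[ℂ] H) ⊓ LinearMap.ker (Q : H →ₗ[ℂ] H) = ⊥ → LinearMap.ker (P : H →ₗ[ℂ] H) ⊓ LinearMap.range (Q : H →ₗ[ℂ] H) = ⊥ →
        Function.Injective ⇑(P + Q - 1)) := by
  have hP : IsIdempotentElem (P : H →ₗ[ℂ] H) := congrArg ContinuousLinearMap.toLinearMap hP2
  have hQ : IsIdempotentElem (Q : H →ₗ[ℂ] H) := congrArg ContinuousLinearMap.toLinearMap hQ2
  have hker : LinearMap.ker ((P + Q - 1 : H →L[ℂ] H) : H →ₗ[ℂ] H) = _ :=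
    LinearMap.ker_add_sub_one_of_isIdempotentElem hP hQ
  refine ⟨hker, fun hPQ hQP => LinearMap.ker_eq_bot.mp ?_⟩
  rw [hker, hPQ, hQP, sup_bot_eq]

/-- For orthogonal projections `P, Q` on a Hilbert space,
`N(P + Q - 1) = (R(P) ∩ N(Q)) ⊕ (N(P) ∩ R(Q))`; in particular, if both of these
intersections are trivial then `P + Q - 1` is injective. -/
theorem ker_sum_sub_one {H : Type*} [NormedAddCommGroup H]
    [InnerProductSpace ℂ H] [CompleteSpace H]
    (P Q : H →L[ℂ] H) (hP : IsSelfAdjoint P) (hP2 : P * P = P)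
    (hQ : IsSelfAdjoint Q) (hQ2 : Q * Q = Q) :
    LinearMap.ker ((P + Q - 1 : H →L[ℂ] H) : H →ₗ[ℂ] H) =
        (LinearMap.range (P : H →ₗ[ℂ] H) ⊓ LinearMap.ker (Q : H →ₗ[ℂ] H)) ⊔ (LinearMap.ker (P : H →ₗ[ℂ] H) ⊓ LinearMap.range (Q : H →ₗ[ℂ] H)) ∧
      (LinearMap.range (P : H →ₗ[ℂ] H) ⊓ LinearMap.ker (Q : H →ₗ[ℂ] H) = ⊥ → LinearMap.ker (P : H →ₗ[ℂ] H) ⊓ LinearMap.range (Q : H →ₗ[ℂ] H) = ⊥ →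
        Function.Injective ⇑(P + Q - 1)) :=
  ker_sum_sub_one_general P Q hP2 hQ2
end
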